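/- Let Q be a finite quiver, let d ≥ 2, and let ρ be a d-covering set of paths of Q, each of length d, such that there exists N with the property that every path of Q of length N has a subpath in ρ (finite dimensionality of KQ/(ρ)). Let α and β be distinct loops of Q such that α^d ∈ ρ, β^d ∈ ρ, no element of ρ has the form α^{d-1}γ or γα^{d-1} with γ an arrow distinct from α, and no element of ρ has the form β^{d-1}γ or γβ^{d-1} with γ an arrow distinct from β. Then α and β are based at distinct vertices of Q. -/

import Mathlib

/-!
If the loops `α` and `β` sat at the same vertex, finite dimensionality would put an element
of `ρ` inside the path `(βα^{d-1})^N`. Its subpaths of length `d` are the rotations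
`α^i β α^j` with `i + j = d - 1`. The rotation with `i = 0` is excluded by hypothesis, and for
`i ≥ 1` the `d`-covering property, applied to the overlap `α^i` of `α^d` and `α^i β α^j`,
puts `α^{d-1}β` into `ρ`, which is excluded as well.
-/

open Quiver

universe u v

variable {V : Type u} [Quiver.{v + 1} V]

/-- The type of paths of a quiver, bundled with their endpoints. -/
abbrev SPath (V : Type u) [Quiver.{v + 1} V] := Σ a b : V, Quiver.Path a b

/-- The type of arrows of a quiver, bundled with their endpoints. -/
abbrev SArrow (V : Type u) [Quiver.{v + 1} V] := Σ a b : V, a ⟶ b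

/-- A set of paths in a quiver, given as a predicate on paths with arbitrary endpoints. -/
abbrev PathSet (V : Type u) [Quiver.{v + 1} V] := ∀ ⦃a b : V⦄, Quiver.Path a b → Prop

/-- `p` is a prefix of `q`. -/
def IsPrefixP {a b c : V} (p : Quiver.Path a b) (q : Quiver.Path a c) : Prop :=
  ∃ p' : Quiver.Path b c, q = p.comp p'

/-- `p` is a suffix of `q`. -/
def IsSuffixP {a b c : V} (p : Quiver.Path b c) (q : Quiver.Path a c) : Prop :=
  ∃ p' : Quiver.Path a b, q = p'.comp p

/-- `p` is a subpath of `q`. -/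
def IsSubpathP {b c a e : V} (p : Quiver.Path b c) (q : Quiver.Path a e) : Prop :=
  ∃ (u : Quiver.Path a b) (v : Quiver.Path c e), q = (u.comp p).comp v

/-- `q` overlaps `p` with overlap `p.comp u`: there are paths `u`, `v` with
`pu = vq` and `1 ≤ ℓ(u) < ℓ(q)`. -/
def OverlapsWith {x y a b : V} (q : Quiver.Path x y) (p : Quiver.Path a b)
    (u : Quiver.Path b y) : Prop :=
  ∃ v : Quiver.Path a x, p.comp u = v.comp q ∧ 1 ≤ u.length ∧ u.length < q.length

/-- `q` properly overlaps `p` with overlap `p.comp u`: additionally `ℓ(v) ≥ 1`. -/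
def ProperlyOverlapsWith {x y a b : V} (q : Quiver.Path x y) (p : Quiver.Path a b)
    (u : Quiver.Path b y) : Prop :=
  ∃ v : Quiver.Path a x, p.comp u = v.comp q ∧ 1 ≤ u.length ∧ u.length < q.length ∧
    1 ≤ v.length

/-- `q` properly overlaps `p` (with some overlap). -/
def ProperlyOverlaps {x y a b : V} (q : Quiver.Path x y) (p : Quiver.Path a b) : Prop :=
  ∃ u : Quiver.Path b y, ProperlyOverlapsWith q p u

/-- `ρ` is `d`-covering: whenever `pq ∈ ρ`, `qr ∈ ρ` and `ℓ(q) ≥ 1`, every subpath of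
`pqr` of length `d` lies in `ρ`. -/
def DCovering (d : ℕ) (ρ : PathSet V) : Prop :=
  ∀ ⦃a b c e : V⦄ (p : Quiver.Path a b) (q : Quiver.Path b c) (r : Quiver.Path c e),
    ρ (p.comp q) → ρ (q.comp r) → 1 ≤ q.length →
    ∀ ⦃x y : V⦄ (s : Quiver.Path x y), s.length = d →
      IsSubpathP s ((p.comp q).comp r) → ρ s

/-- The sets `R^n` of (iterated maximal) overlaps: `R^0` = trivial paths, `R^1` = arrows,
`R^2 = ρ`, and for `n ≥ 3`, `R^n` consists of the paths `R^{n-1}u` where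
`R^{n-1} = R^{n-2}p ∈ R^{n-1}`, some element of `ρ` overlaps `p` with overlap `pu`,
and no element of `ρ` overlaps `p` with overlap a proper prefix of `pu`. -/
def RSet (ρ : PathSet V) : ℕ → PathSet V
  | 0 => fun _ _ p => p.length = 0
  | 1 => fun _ _ p => p.length = 1
  | 2 => ρ
  | n + 3 => fun a e R =>
      ∃ (c : V) (Rp : Quiver.Path a c) (u : Quiver.Path c e),
        RSet ρ (n + 2) Rp ∧ R = Rp.comp u ∧
        ∃ (b : V) (Rpp : Quiver.Path a b) (p : Quiver.Path b c),
          RSet ρ (n + 1) Rpp ∧ Rp = Rpp.comp p ∧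
          (∃ (x : V) (q : Quiver.Path x e), ρ q ∧ OverlapsWith q p u) ∧
          ∀ (x y : V) (q : Quiver.Path x y) (u' : Quiver.Path c y),
            ρ q → OverlapsWith q p u' →
            ¬(IsPrefixP (p.comp u') (p.comp u) ∧ u'.length < u.length)

/-- `δ(n) = (n/2)d` if `n` is even, `((n-1)/2)d + 1` if `n` is odd. -/
def deltaF (d n : ℕ) : ℕ := if n % 2 = 0 then n / 2 * d else (n - 1) / 2 * d + 1

/-- The `m`-th power of a closed path. -/
def cpow {a : V} (T : Quiver.Path a a) : ℕ → Quiver.Path a a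
  | 0 => Quiver.Path.nil
  | n + 1 => (cpow T n).comp T

/-- The list of arrows of a path, in order. -/
def arrowList {a : V} : ∀ {b : V}, Quiver.Path a b → List (SArrow V)
  | _, Quiver.Path.nil => []
  | _, Quiver.Path.cons p e => arrowList p ++ [⟨_, _, e⟩]

/-- A closed trail: a nontrivial closed path with pairwise distinct arrows. -/
def IsClosedTrail {a : V} (T : Quiver.Path a a) : Prop :=
  1 ≤ T.length ∧ (arrowList T).Nodup

/-- `q` lies on the closed path `T`: `q` is a subpath of `T^m` for some `m ≥ 1`. -/
def LiesOn {x y a : V} (q : Quiver.Path x y) (T : Quiver.Path a a) : Prop :=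
  ∃ m : ℕ, 1 ≤ m ∧ IsSubpathP q (cpow T m)

/-- `ρ_T ⊆ ρ`: every path of length `d` lying on `T` belongs to `ρ`. -/
def RhoTSub (d : ℕ) (ρ : PathSet V) {a : V} (T : Quiver.Path a a) : Prop :=
  ∀ ⦃x y : V⦄ (q : Quiver.Path x y), q.length = d → LiesOn q T → ρ q

/-- `SegChain A L a b p` : the path `p` decomposes as the composite of the listed
segments, each of length `A`. -/
inductive SegChain (A : ℕ) : List (SPath V) → (a b : V) → Quiver.Path a b → Prop
  | nil (a : V) : SegChain A [] a a Quiver.Path.nil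
  | cons {a b c : V} (α : Quiver.Path a b) (hα : α.length = A) {p : Quiver.Path b c}
      {L : List (SPath V)} (hp : SegChain A L b c p) :
      SegChain A (⟨a, b, α⟩ :: L) a c (α.comp p)

/-- An `A`-path: a path which decomposes into segments of length `A`. -/
def IsAPath (A : ℕ) {a b : V} (p : Quiver.Path a b) : Prop :=
  ∃ L : List (SPath V), SegChain A L a b p

/-- `p` is an `A`-subpath of `q`: a subpath which is an `A`-path starting at a position
that is a multiple of `A`. -/
def IsASubpath (A : ℕ) {b c a e : V} (p : Quiver.Path b c) (q : Quiver.Path a e) : Prop :=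
  ∃ (u : Quiver.Path a b) (v : Quiver.Path c e),
    q = (u.comp p).comp v ∧ A ∣ u.length ∧ IsAPath A p

/-- A closed `A`-trail: a nontrivial closed `A`-path with pairwise distinct `A`-segments. -/
def IsClosedATrail (A : ℕ) {a : V} (T : Quiver.Path a a) : Prop :=
  ∃ L : List (SPath V), SegChain A L a a T ∧ L ≠ [] ∧ L.Nodup

/-- The `A`-path `q` lies on the closed `A`-path `T`: `q` is an `A`-subpath of `T^m` for
some `m ≥ 1`. -/
def ALiesOn (A : ℕ) {x y a : V} (q : Quiver.Path x y) (T : Quiver.Path a a) : Prop :=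
  ∃ m : ℕ, 1 ≤ m ∧ IsASubpath A q (cpow T m)

/-- `ρ_T ⊆ ρ` in the `(D,A)`-setting: every path of length `D` which lies on `T` as an
`A`-path belongs to `ρ`. -/
def ARhoTSub (D A : ℕ) (ρ : PathSet V) {a : V} (T : Quiver.Path a a) : Prop :=
  ∀ ⦃x y : V⦄ (q : Quiver.Path x y), q.length = D → ALiesOn A q T → ρ q

/-- The `(D,A)`-overlap property: every path in `ρ` has length `D`, and whenever
`R₂ ∈ ρ` properly overlaps `R₁ ∈ ρ` with overlap `R₁u`, then `ℓ(u) ≥ A` and some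
`R₃ ∈ ρ` properly overlaps `R₁` with overlap `R₁u'` where `ℓ(u') = A` and `u'` is a
prefix of `u`. -/
def DAOverlapProperty (D A : ℕ) (ρ : PathSet V) : Prop :=
  (∀ ⦃a b : V⦄ (p : Quiver.Path a b), ρ p → p.length = D) ∧
  ∀ ⦃a b x y : V⦄ (R₁ : Quiver.Path a b) (R₂ : Quiver.Path x y) (u : Quiver.Path b y),
    ρ R₁ → ρ R₂ → ProperlyOverlapsWith R₂ R₁ u →
    A ≤ u.length ∧
      ∃ (y' : V) (x' : V) (R₃ : Quiver.Path x' y') (u' : Quiver.Path b y'),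
        ρ R₃ ∧ ProperlyOverlapsWith R₃ R₁ u' ∧ u'.length = A ∧ IsPrefixP u' u

/-- Condition (C1), part (1), for a loop `α`. -/
def CondLoop (d : ℕ) (ρ : PathSet V) {v : V} (α : v ⟶ v) : Prop :=
  ρ (cpow (Quiver.Hom.toPath α) d) ∧
  (∀ ⦃w : V⦄ (β : v ⟶ w), (⟨v, w, β⟩ : SArrow V) ≠ ⟨v, v, α⟩ →
      ¬ ρ ((cpow (Quiver.Hom.toPath α) (d - 1)).comp (Quiver.Hom.toPath β))) ∧
  (∀ ⦃w : V⦄ (β : w ⟶ v), (⟨w, v, β⟩ : SArrow V) ≠ ⟨v, v, α⟩ →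
      ¬ ρ ((Quiver.Hom.toPath β).comp (cpow (Quiver.Hom.toPath α) (d - 1))))

/-- Condition (C1): (1) every loop `α` satisfies `α^d ∈ ρ` and no element of `ρ` has the
form `α^{d-1}β` or `βα^{d-1}` with `β` an arrow distinct from `α`; (2) for every closed
trail `T` with `ℓ(T) > 1` and `ρ_T ⊆ ρ`, no element of `ρ∖ρ_T` begins or ends with an
arrow of `T`. -/
def CondC1 (d : ℕ) (ρ : PathSet V) : Prop :=
  (∀ (v : V) (α : v ⟶ v), CondLoop d ρ α) ∧
  (∀ ⦃a : V⦄ (T : Quiver.Path a a), IsClosedTrail T → 1 < T.length → RhoTSub d ρ T →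
    ∀ ⦃x y : V⦄ (q : Quiver.Path x y), ρ q → ¬(q.length = d ∧ LiesOn q T) →
      (∀ ⦃w : V⦄ (e : x ⟶ w) (q' : Quiver.Path w y),
          q = (Quiver.Hom.toPath e).comp q' → (⟨x, w, e⟩ : SArrow V) ∉ arrowList T) ∧
      (∀ ⦃w : V⦄ (e : w ⟶ y) (q' : Quiver.Path x w),
          q = q'.comp (Quiver.Hom.toPath e) → (⟨w, y, e⟩ : SArrow V) ∉ arrowList T))

/-- Condition (C2): (1) for every `A`-loop `c`, some rotation `c'` of `c` satisfies
`c'^d ∈ ρ` and no element of `ρ` has the form `c'^{d-1}β` or `βc'^{d-1}` with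
`β` a path of length `A` distinct from `c'`; (2) for every closed `A`-trail `T` with at
least two segments and `ρ_T ⊆ ρ`, no element of `ρ∖ρ_T` begins or ends with an
`A`-segment of `T`. -/
def CondC2 (D A d : ℕ) (ρ : PathSet V) : Prop :=
  (∀ ⦃v : V⦄ (c : Quiver.Path v v), c.length = A →
    ∃ (w : V) (p : Quiver.Path v w) (q : Quiver.Path w v), c = p.comp q ∧ p.length < A ∧
      ρ (cpow (q.comp p) d) ∧
      (∀ ⦃x : V⦄ (β : Quiver.Path w x), β.length = A →
          (⟨w, x, β⟩ : SPath V) ≠ ⟨w, w, q.comp p⟩ →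
          ¬ ρ ((cpow (q.comp p) (d - 1)).comp β)) ∧
      (∀ ⦃x : V⦄ (β : Quiver.Path x w), β.length = A →
          (⟨x, w, β⟩ : SPath V) ≠ ⟨w, w, q.comp p⟩ →
          ¬ ρ (β.comp (cpow (q.comp p) (d - 1))))) ∧
  (∀ ⦃a : V⦄ (T : Quiver.Path a a) (L : List (SPath V)),
      SegChain A L a a T → L.Nodup → 2 ≤ L.length → ARhoTSub D A ρ T →
      ∀ ⦃x y : V⦄ (q : Quiver.Path x y), ρ q → ¬(q.length = D ∧ ALiesOn A q T) →
        (∀ ⦃w : V⦄ (α : Quiver.Path x w) (q' : Quiver.Path w y),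
            q = α.comp q' → (⟨x, w, α⟩ : SPath V) ∉ L) ∧
        (∀ ⦃w : V⦄ (α : Quiver.Path w y) (q' : Quiver.Path x w),
            q = q'.comp α → (⟨w, y, α⟩ : SPath V) ∉ L))

namespace List

theorem getElem_flatten_replicate {α : Type*} (B : List α) (M i : ℕ)
    (h : i < ((replicate M B).flatten).length) :
    ((replicate M B).flatten)[i] =
      B[i % B.length]'(Nat.mod_lt _ (length_pos_of_ne_nil (by rintro rfl; simp at h))) := by
  induction M generalizing i with
  | zero => simp at h
  | succ M ih =>
    simp only [replicate_succ, flatten_cons, getElem_append]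
    split_ifs with hi
    · simp only [Nat.mod_eq_of_lt hi]
    · simp only [ih, Nat.mod_eq_sub_mod (not_lt.mp hi)]

theorem IsInfix.exists_eq_rotate_of_flatten_replicate {α : Type*} {l B : List α} {M : ℕ}
    (h : l <:+: (replicate M B).flatten) (hl : l.length = B.length) :
    ∃ k, l = B.rotate k := by
  obtain ⟨s, t, hst⟩ := h
  refine ⟨s.length % B.length, ext_getElem (by simp [hl]) fun j hj _ => ?_⟩
  have hjL : s.length + j < ((replicate M B).flatten).length := by
    rw [← hst]
    simp only [append_assoc, length_append, add_lt_add_iff_left]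
    omega
  have := getElem_flatten_replicate B M _ hjL
  simp only [← hst, append_assoc, getElem_append_right (Nat.le_add_right _ _),
    Nat.add_sub_cancel_left, getElem_append_left hj] at this
  rw [this, getElem_rotate]
  congr 1
  rw [Nat.add_mod_mod, Nat.add_comm]

theorem exists_rotate_cons_replicate_eq {α : Type*} (a b : α) (n k : ℕ) :
    ∃ i j, i + j = n ∧
      (b :: replicate n a).rotate k = replicate i a ++ b :: replicate j a := by
  rw [← rotate_mod, length_cons, length_replicate]
  obtain ⟨r, hr, hkr⟩ : ∃ r, r < n + 1 ∧ k % (n + 1) = r := ⟨_, Nat.mod_lt _ n.succ_pos, rfl⟩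
  rw [hkr]
  rcases r with _ | r
  · exact ⟨0, n, by simp⟩
  · refine ⟨n - r, r, by omega, ?_⟩
    rw [rotate_eq_drop_append_take (by simp; omega)]
    simp [drop_replicate, take_replicate, Nat.min_eq_left (by omega : r ≤ n)]

end List

section ArrowList

variable {a b c : V}

lemma arrowList_comp (p : Path a b) (q : Path b c) :
    arrowList (p.comp q) = arrowList p ++ arrowList q := by
  induction q with
  | nil => simp [arrowList]
  | cons q e ih => simp [arrowList, ih]

lemma arrowList_toPath (e : a ⟶ b) : arrowList e.toPath = [⟨a, b, e⟩] := rfl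

lemma length_arrowList (p : Path a b) : (arrowList p).length = p.length := by
  induction p with
  | nil => rfl
  | cons p e ih => simp [arrowList, ih]

lemma IsSubpathP.arrowList_isInfix {x y : V} {s : Path x y} {p : Path a b}
    (h : IsSubpathP s p) : arrowList s <:+: arrowList p := by
  obtain ⟨l, r, rfl⟩ := h
  exact ⟨arrowList l, arrowList r, by simp [arrowList_comp]⟩

lemma IsSubpathP.comp_right {x y : V} {s : Path x y} {p : Path a b} (h : IsSubpathP s p)
    (q : Path b c) : IsSubpathP s (p.comp q) := by
  obtain ⟨l, r, rfl⟩ := h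
  exact ⟨l, r.comp q, by simp [Path.comp_assoc]⟩

lemma sigma_eq_of_arrowList_eq {a' b' : V} {p : Path a b} {q : Path a' b'}
    (h : arrowList p = arrowList q) (hp : p.length ≠ 0) :
    (⟨a, b, p⟩ : SPath V) = ⟨a', b', q⟩ := by
  induction p generalizing b' q with
  | nil => exact absurd rfl hp
  | cons p e ih =>
    cases q with
    | nil => simp [arrowList] at h
    | cons q f =>
      simp only [arrowList] at h
      obtain ⟨hpq, hef⟩ := List.append_inj' h rfl
      by_cases hp0 : p.length = 0
      · have hq0 : q.length = 0 := by rw [← length_arrowList, ← hpq, length_arrowList, hp0]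
        obtain rfl := Path.eq_of_length_zero p hp0
        obtain rfl := Path.eq_of_length_zero q hq0
        obtain rfl := Path.eq_nil_of_length_zero p hp0
        obtain rfl := Path.eq_nil_of_length_zero q hq0
        cases List.singleton_inj.mp hef
        rfl
      · cases ih hpq hp0
        cases List.singleton_inj.mp hef
        rfl

end ArrowList

section Power

variable {a : V}

lemma cpow_add (T : Path a a) (m n : ℕ) : cpow T (m + n) = (cpow T m).comp (cpow T n) := by
  induction n with
  | zero => rfl
  | succ n ih => rw [← Nat.add_assoc, cpow, cpow, ih, Path.comp_assoc]

lemma cpow_one (T : Path a a) : cpow T 1 = T := Path.nil_comp T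

lemma length_cpow (T : Path a a) (n : ℕ) : (cpow T n).length = n * T.length := by
  induction n with
  | zero => simp [cpow]
  | succ n ih => rw [cpow, Path.length_comp, ih, Nat.succ_mul]

lemma arrowList_cpow (T : Path a a) (n : ℕ) :
    arrowList (cpow T n) = (List.replicate n (arrowList T)).flatten := by
  induction n with
  | zero => rfl
  | succ n ih => rw [cpow, arrowList_comp, ih, List.replicate_succ', List.flatten_append,
      List.flatten_singleton]

end Power

lemma arrowList_cpow_toPath {a : V} (e : a ⟶ a) (n : ℕ) :
    arrowList (cpow e.toPath n) = List.replicate n ⟨a, a, e⟩ := by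
  rw [arrowList_cpow, arrowList_toPath, List.flatten_replicate_singleton]

lemma exists_mem_isSubpathP_of_le_length {ρ : PathSet V} {N : ℕ}
    (hN : ∀ ⦃x y : V⦄ (p : Path x y), p.length = N →
      ∃ (x' y' : V) (s : Path x' y'), ρ s ∧ IsSubpathP s p)
    {a b : V} (p : Path a b) (hp : N ≤ p.length) :
    ∃ (x' y' : V) (s : Path x' y'), ρ s ∧ IsSubpathP s p := by
  obtain ⟨_, p₁, p₂, rfl, hp₁⟩ := p.exists_eq_comp_of_le_length hp
  obtain ⟨x', y', s, hs, hsub⟩ := hN p₁ hp₁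
  exact ⟨x', y', s, hs, hsub.comp_right p₂⟩

namespace DCovering

variable {d : ℕ} {ρ : PathSet V} {u : V} {α : u ⟶ u}

lemma cpow_comp_toPath_mem (hcov : DCovering d ρ) (hαd : ρ (cpow α.toPath d))
    {z y : V} (e : u ⟶ z) (r : Path z y) {k : ℕ} (hk : 1 ≤ k) (hkd : k ≤ d)
    (h : ρ ((cpow α.toPath k).comp (e.toPath.comp r))) :
    ρ ((cpow α.toPath (d - 1)).comp e.toPath) := by
  have hd : d = 1 + (d - 1) := by omega
  refine hcov (cpow α.toPath (d - k)) (cpow α.toPath k) (e.toPath.comp r) ?_ h ?_ _ ?_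
    ⟨α.toPath, r, ?_⟩
  · rwa [← cpow_add, Nat.sub_add_cancel hkd]
  · simpa [length_cpow] using hk
  · simp only [Path.length_comp, length_cpow, Path.length_toPath]
    omega
  · rw [← cpow_add, Nat.sub_add_cancel hkd]
    conv_lhs => rw [hd, cpow_add, cpow_one]
    simp only [Path.comp_assoc]

lemma not_cpow_comp_toPath_comp_cpow (hcov : DCovering d ρ) (hαd : ρ (cpow α.toPath d))
    {β : u ⟶ u} (hα1 : ¬ ρ ((cpow α.toPath (d - 1)).comp β.toPath))
    (hα2 : ¬ ρ (β.toPath.comp (cpow α.toPath (d - 1)))) {i j : ℕ} (hij : i + j + 1 = d) :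
    ¬ ρ ((cpow α.toPath i).comp (β.toPath.comp (cpow α.toPath j))) := by
  intro h
  rcases i with _ | i
  · obtain rfl : j = d - 1 := by omega
    exact hα2 (by simpa [cpow] using h)
  · exact hα1 (hcov.cpow_comp_toPath_mem hαd β _ (Nat.le_add_left 1 i) (by omega) h)

end DCovering

/-- two distinct loops `α`, `β` satisfying the conditions of (C1)(1) are
based at distinct vertices. -/
theorem stmt_7 {V : Type u} [Quiver.{v + 1} V] [Fintype V] [∀ a b : V, Fintype (a ⟶ b)]
    (d : ℕ) (hd : 2 ≤ d) (ρ : PathSet V)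
    (hρlen : ∀ ⦃a b : V⦄ (p : Quiver.Path a b), ρ p → p.length = d)
    (hcov : DCovering d ρ)
    (hfin : ∃ N : ℕ, ∀ ⦃x y : V⦄ (p : Quiver.Path x y), p.length = N →
      ∃ (x' y' : V) (s : Quiver.Path x' y'), ρ s ∧ IsSubpathP s p)
    {u w : V} (α : u ⟶ u) (β : w ⟶ w)
    (hne : (⟨u, u, α⟩ : SArrow V) ≠ ⟨w, w, β⟩)
    (hαd : ρ (cpow (Quiver.Hom.toPath α) d))
    (hβd : ρ (cpow (Quiver.Hom.toPath β) d))
    (hα1 : ∀ ⦃z : V⦄ (γ : u ⟶ z), (⟨u, z, γ⟩ : SArrow V) ≠ ⟨u, u, α⟩ →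
      ¬ ρ ((cpow (Quiver.Hom.toPath α) (d - 1)).comp (Quiver.Hom.toPath γ)))
    (hα2 : ∀ ⦃z : V⦄ (γ : z ⟶ u), (⟨z, u, γ⟩ : SArrow V) ≠ ⟨u, u, α⟩ →
      ¬ ρ ((Quiver.Hom.toPath γ).comp (cpow (Quiver.Hom.toPath α) (d - 1))))
    (hβ1 : ∀ ⦃z : V⦄ (γ : w ⟶ z), (⟨w, z, γ⟩ : SArrow V) ≠ ⟨w, w, β⟩ →
      ¬ ρ ((cpow (Quiver.Hom.toPath β) (d - 1)).comp (Quiver.Hom.toPath γ)))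
    (hβ2 : ∀ ⦃z : V⦄ (γ : z ⟶ w), (⟨z, w, γ⟩ : SArrow V) ≠ ⟨w, w, β⟩ →
      ¬ ρ ((Quiver.Hom.toPath γ).comp (cpow (Quiver.Hom.toPath β) (d - 1)))) :
    u ≠ w := by
  rintro rfl
  obtain ⟨N, hN⟩ := hfin
  let P := cpow (β.toPath.comp (cpow α.toPath (d - 1))) N
  have hP : arrowList P =
      (List.replicate N (⟨u, u, β⟩ :: List.replicate (d - 1) ⟨u, u, α⟩)).flatten := by
    simp only [P, arrowList_cpow, arrowList_comp, arrowList_toPath, List.singleton_append,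
      List.flatten_replicate_singleton]
  obtain ⟨x, y, s, hs, hsP⟩ := exists_mem_isSubpathP_of_le_length hN P <| by
    simp only [P, length_cpow, Path.length_comp, Path.length_toPath]
    exact Nat.le_mul_of_pos_right N (by omega)
  have hs_len := hρlen s hs
  obtain ⟨k, hk⟩ := (hP ▸ hsP.arrowList_isInfix).exists_eq_rotate_of_flatten_replicate <| by
    simp only [length_arrowList, hs_len, List.length_cons, List.length_replicate]
    omega
  obtain ⟨i, j, hij, hrot⟩ :=
    List.exists_rotate_cons_replicate_eq (⟨u, u, α⟩ : SArrow V) ⟨u, u, β⟩ (d - 1) k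
  have hs_eq : arrowList s =
      arrowList ((cpow α.toPath i).comp (β.toPath.comp (cpow α.toPath j))) := by
    rw [hk, hrot, arrowList_comp, arrowList_comp, arrowList_cpow_toPath, arrowList_cpow_toPath,
      arrowList_toPath, List.singleton_append]
  cases sigma_eq_of_arrowList_eq hs_eq (by omega)
  exact hcov.not_cpow_comp_toPath_comp_cpow hαd (hα1 β hne.symm) (hα2 β hne.symm) (by omega) hs
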